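/- arXiv:2204.12470 — 3 statements merged into one kernel-verified Lean document; each statement's English description precedes it below -/
import Mathlib

section
/- For any Y in the image of the projection Ξ(X) = (1/3)(X + X^{RΓ} + X^{ΓR}) on real d²×d² matrices, one has Y^R = Y^Γ, and consequently the singular values of Y^R and Y^Γ coincide; moreover Y Yᵀ = Y^R (Y^R)ᵀ = Y^Γ (Y^Γ)ᵀ, so Y, Y^R and Y^Γ all share the same singular values (Y is isoentropic). -/
/-- The reshuffling realignment `R` on real matrices. -/
def reshR (d : ℕ) (X : Matrix (Fin d × Fin d) (Fin d × Fin d) ℝ) :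
    Matrix (Fin d × Fin d) (Fin d × Fin d) ℝ :=
  Matrix.of fun p q => X (p.1, q.1) (p.2, q.2)

/-- The partial transpose realignment `Γ` on real matrices. -/
def ptR (d : ℕ) (X : Matrix (Fin d × Fin d) (Fin d × Fin d) ℝ) :
    Matrix (Fin d × Fin d) (Fin d × Fin d) ℝ :=
  Matrix.of fun p q => X (p.1, q.2) (q.1, p.2)

/-- `Ξ(X) = (1/3)(X + X^{RΓ} + X^{ΓR})` on real matrices. -/
noncomputable def XiR (d : ℕ) (X : Matrix (Fin d × Fin d) (Fin d × Fin d) ℝ) :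
    Matrix (Fin d × Fin d) (Fin d × Fin d) ℝ :=
  (3 : ℝ)⁻¹ • (X + ptR d (reshR d X) + reshR d (ptR d X))

theorem stmt_16 (d : ℕ) (X : Matrix (Fin d × Fin d) (Fin d × Fin d) ℝ) :
    reshR d (XiR d X) = ptR d (XiR d X) ∧
    XiR d X * (XiR d X).transpose =
      reshR d (XiR d X) * (reshR d (XiR d X)).transpose ∧
    XiR d X * (XiR d X).transpose =
      ptR d (XiR d X) * (ptR d (XiR d X)).transpose := by
  set Y := XiR d X with hY
  have h1 : reshR d Y = ptR d Y := by
    ext ⟨a, b⟩ ⟨c, e⟩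
    simp only [hY, XiR, reshR, ptR, Matrix.of_apply, Matrix.smul_apply,
      Matrix.add_apply, smul_eq_mul]
    ring
  -- cyclic symmetry of Y
  have key : ∀ j k l m : Fin d, Y (j, k) (l, m) = Y (j, m) (k, l) := by
    intro j k l m
    have := congrFun (congrFun h1 (j, l)) (k, m)
    simpa [reshR, ptR] using this
  have h2 : Y * Y.transpose = reshR d Y * (reshR d Y).transpose := by
    ext ⟨a, b⟩ ⟨c, e⟩
    simp only [Matrix.mul_apply, Matrix.transpose_apply, reshR, Matrix.of_apply]
    have step : ∀ q : Fin d × Fin d,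
        Y (a, q.1) (b, q.2) * Y (c, q.1) (e, q.2)
          = Y (a, b) (q.2, q.1) * Y (c, e) (q.2, q.1) := by
      rintro ⟨q1, q2⟩
      rw [key a q1 b q2, key a q2 q1 b, key c q1 e q2, key c q2 q1 e]
    rw [Finset.sum_congr rfl (fun q _ => step q)]
    exact (Fintype.sum_equiv (Equiv.prodComm (Fin d) (Fin d)) _ _
      (by rintro ⟨q1, q2⟩; rfl)).symm
  exact ⟨h1, h2, by rw [h2, h1]⟩
end

section
/- For the linear entropy E(M) = (d²/(d²−1))·(1 − Tr((MM†)²)/Tr(MM†)²) on d²×d² matrices, define the entangling power e_p(U) = E(U^R) + E((US)^R) − 1, where ^R denotes reshuffling and S is the swap operator on ℂ^d ⊗ ℂ^d; then for any U ∈ U(d²) and local unitaries V₁,V₂,V₃,V₄ ∈ U(d), one has e_p((V₁⊗V₂)U(V₃⊗V₄)) = e_p(U). -/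
open Matrix Kronecker

/-- The reshuffling realignment `R`: `(U^R)_{(j,k),(l,m)} = U_{(j,l),(k,m)}`. -/
def resh (d : ℕ) (U : Matrix (Fin d × Fin d) (Fin d × Fin d) ℂ) :
    Matrix (Fin d × Fin d) (Fin d × Fin d) ℂ :=
  Matrix.of fun p q => U (p.1, q.1) (p.2, q.2)

/-- The swap operator `S` on `ℂ^d ⊗ ℂ^d`. -/
def swapOp (d : ℕ) : Matrix (Fin d × Fin d) (Fin d × Fin d) ℂ :=
  Matrix.of fun p q => if p.1 = q.2 ∧ p.2 = q.1 then 1 else 0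

/-- The normalized linear entropy `E(M)` of the singular value distribution of `M`. -/
noncomputable def linEnt (d : ℕ) (M : Matrix (Fin d × Fin d) (Fin d × Fin d) ℂ) : ℂ :=
  ((d : ℂ) ^ 2 / ((d : ℂ) ^ 2 - 1)) *
    (1 - Matrix.trace (M * M.conjTranspose * (M * M.conjTranspose)) /
      (Matrix.trace (M * M.conjTranspose)) ^ 2)

/-- The entangling power `e_p(U) = E(U^R) + E((US)^R) − 1`. -/
noncomputable def entPower (d : ℕ) (U : Matrix (Fin d × Fin d) (Fin d × Fin d) ℂ) : ℂ :=
  linEnt d (resh d U) + linEnt d (resh d (U * swapOp d)) - 1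

lemma kron_conjTranspose {d : ℕ} (A B : Matrix (Fin d) (Fin d) ℂ) :
    (A ⊗ₖ B)ᴴ = Aᴴ ⊗ₖ Bᴴ := by
  ext ⟨i, j⟩ ⟨k, l⟩
  simp [Matrix.conjTranspose_apply, Matrix.kroneckerMap_apply]

lemma kron_unitary {d : ℕ} {A B : Matrix (Fin d) (Fin d) ℂ}
    (hA : A ∈ Matrix.unitaryGroup (Fin d) ℂ) (hB : B ∈ Matrix.unitaryGroup (Fin d) ℂ) :
    (A ⊗ₖ B) ∈ Matrix.unitaryGroup (Fin d × Fin d) ℂ := by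
  rw [Matrix.mem_unitaryGroup_iff] at hA hB ⊢
  have : star (A ⊗ₖ B) = star A ⊗ₖ star B := kron_conjTranspose A B
  rw [this, ← Matrix.mul_kronecker_mul, hA, hB, Matrix.one_kronecker_one]

lemma transpose_unitary {d : ℕ} {A : Matrix (Fin d) (Fin d) ℂ}
    (hA : A ∈ Matrix.unitaryGroup (Fin d) ℂ) :
    Aᵀ ∈ Matrix.unitaryGroup (Fin d) ℂ := by
  rw [Matrix.mem_unitaryGroup_iff]
  have h : star A * A = 1 := Matrix.mem_unitaryGroup_iff'.mp hA
  have : star Aᵀ = (star A)ᵀ := by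
    ext i j; simp [Matrix.conjTranspose_apply]
  rw [this, ← Matrix.transpose_mul, h, Matrix.transpose_one]

lemma linEnt_unitary {d : ℕ} {P Q : Matrix (Fin d × Fin d) (Fin d × Fin d) ℂ}
    (hP : P ∈ Matrix.unitaryGroup (Fin d × Fin d) ℂ)
    (hQ : Q ∈ Matrix.unitaryGroup (Fin d × Fin d) ℂ)
    (M : Matrix (Fin d × Fin d) (Fin d × Fin d) ℂ) :
    linEnt d (P * M * Q) = linEnt d M := by
  have hQ1 : Q * Qᴴ = 1 := Matrix.mem_unitaryGroup_iff.mp hQ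
  have hP1 : Pᴴ * P = 1 := Matrix.mem_unitaryGroup_iff'.mp hP
  have key : (P * M * Q) * (P * M * Q)ᴴ = P * (M * Mᴴ) * Pᴴ := by
    simp only [Matrix.conjTranspose_mul]
    calc P * M * Q * (Qᴴ * (Mᴴ * Pᴴ)) = P * M * (Q * Qᴴ) * (Mᴴ * Pᴴ) := by
          simp only [Matrix.mul_assoc]
      _ = P * (M * Mᴴ) * Pᴴ := by rw [hQ1]; simp only [Matrix.mul_mul_apply, Matrix.mul_one, Matrix.mul_assoc]
  have tr1 : Matrix.trace ((P * M * Q) * (P * M * Q)ᴴ) = Matrix.trace (M * Mᴴ) := by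
    rw [key, Matrix.trace_mul_cycle, ← Matrix.mul_assoc, hP1, Matrix.one_mul]
  have tr2 : Matrix.trace ((P * M * Q) * (P * M * Q)ᴴ * ((P * M * Q) * (P * M * Q)ᴴ)) =
      Matrix.trace (M * Mᴴ * (M * Mᴴ)) := by
    rw [key]
    calc Matrix.trace (P * (M * Mᴴ) * Pᴴ * (P * (M * Mᴴ) * Pᴴ))
        = Matrix.trace (P * ((M * Mᴴ) * (Pᴴ * P) * (M * Mᴴ)) * Pᴴ) := by
          simp only [Matrix.mul_assoc]
      _ = Matrix.trace (M * Mᴴ * (M * Mᴴ)) := by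
          rw [hP1, Matrix.mul_one, Matrix.trace_mul_cycle, ← Matrix.mul_assoc, hP1,
            Matrix.one_mul]
  unfold linEnt
  rw [tr1, tr2]

lemma resh_kron {d : ℕ} (A B C D : Matrix (Fin d) (Fin d) ℂ)
    (U : Matrix (Fin d × Fin d) (Fin d × Fin d) ℂ) :
    resh d ((A ⊗ₖ B) * U * (C ⊗ₖ D)) = (A ⊗ₖ Cᵀ) * resh d U * (Bᵀ ⊗ₖ D) := by
  ext ⟨j, k⟩ ⟨l, m⟩
  simp only [resh, Matrix.of_apply, Matrix.mul_apply, Matrix.kroneckerMap_apply,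
    Finset.sum_mul, Finset.mul_sum, Matrix.transpose_apply]
  rw [← Finset.sum_product', ← Finset.sum_product']
  refine Fintype.sum_equiv
    ⟨fun x => ((x.2.2, x.1.2), (x.2.1, x.1.1)), fun x => ((x.2.2, x.1.2), (x.2.1, x.1.1)),
      fun x => rfl, fun x => rfl⟩ _ _ fun x => ?_
  simp only [Equiv.coe_fn_mk]
  ring

lemma kron_swap {d : ℕ} (C D : Matrix (Fin d) (Fin d) ℂ) :
    (C ⊗ₖ D) * swapOp d = swapOp d * (D ⊗ₖ C) := by
  ext ⟨a, b⟩ ⟨l, m⟩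
  simp only [Matrix.mul_apply, swapOp, Matrix.of_apply, Matrix.kroneckerMap_apply,
    Fintype.sum_prod_type]
  simp [ite_and, Finset.sum_ite_eq, Finset.sum_ite_eq', mul_comm]

theorem stmt_18 (d : ℕ) (hd : 2 ≤ d)
    (U : Matrix (Fin d × Fin d) (Fin d × Fin d) ℂ)
    (hU : U ∈ Matrix.unitaryGroup (Fin d × Fin d) ℂ)
    (V₁ V₂ V₃ V₄ : Matrix (Fin d) (Fin d) ℂ)
    (hV₁ : V₁ ∈ Matrix.unitaryGroup (Fin d) ℂ) (hV₂ : V₂ ∈ Matrix.unitaryGroup (Fin d) ℂ)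
    (hV₃ : V₃ ∈ Matrix.unitaryGroup (Fin d) ℂ) (hV₄ : V₄ ∈ Matrix.unitaryGroup (Fin d) ℂ) :
    entPower d ((V₁ ⊗ₖ V₂) * U * (V₃ ⊗ₖ V₄)) = entPower d U := by
  unfold entPower
  have h1 : resh d ((V₁ ⊗ₖ V₂) * U * (V₃ ⊗ₖ V₄))
      = (V₁ ⊗ₖ V₃ᵀ) * resh d U * (V₂ᵀ ⊗ₖ V₄) := resh_kron _ _ _ _ _
  have h2 : (V₁ ⊗ₖ V₂) * U * (V₃ ⊗ₖ V₄) * swapOp d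
      = (V₁ ⊗ₖ V₂) * (U * swapOp d) * (V₄ ⊗ₖ V₃) := by
    rw [Matrix.mul_assoc, kron_swap]
    simp only [Matrix.mul_assoc]
  rw [h1, h2, resh_kron,
    linEnt_unitary (kron_unitary hV₁ (transpose_unitary hV₃))
      (kron_unitary (transpose_unitary hV₂) hV₄),
    linEnt_unitary (kron_unitary hV₁ (transpose_unitary hV₄))
      (kron_unitary (transpose_unitary hV₂) hV₃)]
end

section
/- A pure state |ψ⟩ = ∑_{j,k,l,m=1}^{d} T_{jklm} |j⟩|k⟩|l⟩|m⟩ of four qudits is absolutely maximally entangled (all two-party reduced density matrices equal I_{d²}/d²) if and only if the three d²×d² matrices U, U^Γ, U^R obtained from the tensor T — namely U_{(j,k),(l,m)} = T_{jklm}, (U^Γ)_{(j,k),(l,m)} = T_{jmlk}, (U^R)_{(j,k),(l,m)} = T_{jlkm} — are all proportional to unitary matrices (equivalently, (1/d)·U is 2-unitary). -/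
/-!
Cut the four parties into a row pair and a column pair: `T` becomes a `d² × d²` matrix `M`, and
the marginal of `|ψ⟩` on the row pair is `M * Mᴴ`. As `‖M‖_F = 1`, taking traces shows that
`M * Mᴴ = I / d²` iff some multiple of `M` (namely `d • M`) is unitary. The complementary cut
gives `Mᵀ` up to a permutation of rows and columns, which does not affect unitarity, so the six
marginals reduce to the three cuts with the first party among the rows. These give `U`, `U^R`
and `U^Γ`, the last with its two column indices swapped.
-/

namespace Matrix

variable {n 𝕜 : Type*} [Fintype n] [DecidableEq n] [RCLike 𝕜]

/-- `M` is read as the coefficient matrix of the bipartite pure state `∑ M i j |i⟩|j⟩`, whose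
reduced state on the first factor is `M * Mᴴ`. -/
def IsMaximallyEntangled (M : Matrix n n 𝕜) : Prop :=
  M * Mᴴ = (Fintype.card n : 𝕜)⁻¹ • 1

omit [DecidableEq n] in
theorem trace_mul_conjTranspose_self (M : Matrix n n 𝕜) :
    trace (M * Mᴴ) = ((∑ i, ∑ j, ‖M i j‖ ^ 2 : ℝ) : 𝕜) := by
  simp [trace, mul_apply, RCLike.mul_conj]

omit [DecidableEq n] in
theorem smul_mul_conjTranspose_smul (c : 𝕜) (M : Matrix n n 𝕜) :
    (c • M) * (c • M)ᴴ = (c * star c) • (M * Mᴴ) := by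
  rw [conjTranspose_smul, smul_mul_smul_comm]

theorem isMaximallyEntangled_iff_exists_smul_mem_unitaryGroup {M : Matrix n n 𝕜}
    (hM : ∑ i, ∑ j, ‖M i j‖ ^ 2 = 1) :
    IsMaximallyEntangled M ↔ ∃ c : 𝕜, c • M ∈ unitaryGroup n 𝕜 := by
  have htrace : trace (M * Mᴴ) = 1 := by
    rw [trace_mul_conjTranspose_self, hM, RCLike.ofReal_one]
  have hcard : (Fintype.card n : 𝕜) ≠ 0 := by
    intro h
    have : IsEmpty n := Fintype.card_eq_zero_iff.mp (by exact_mod_cast h)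
    simp [trace] at htrace
  constructor
  · intro h
    refine ⟨(Real.sqrt (Fintype.card n) : 𝕜), ?_⟩
    rw [mem_unitaryGroup_iff, star_eq_conjTranspose, smul_mul_conjTranspose_smul, h, smul_smul]
    convert one_smul 𝕜 (1 : Matrix n n 𝕜)
    rw [RCLike.star_def, RCLike.conj_ofReal, ← RCLike.ofReal_mul,
      Real.mul_self_sqrt (Nat.cast_nonneg _), RCLike.ofReal_natCast, mul_inv_cancel₀ hcard]
  · rintro ⟨c, hc⟩
    rw [mem_unitaryGroup_iff, star_eq_conjTranspose, smul_mul_conjTranspose_smul] at hc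
    have hcc : c * star c = Fintype.card n := by
      simpa [htrace] using congrArg trace hc
    rw [IsMaximallyEntangled, ← hc, hcc, smul_smul, inv_mul_cancel₀ hcard, one_smul]

theorem isMaximallyEntangled_transpose_iff {M : Matrix n n 𝕜}
    (hM : ∑ i, ∑ j, ‖M i j‖ ^ 2 = 1) :
    IsMaximallyEntangled Mᵀ ↔ IsMaximallyEntangled M := by
  have hMt : ∑ i, ∑ j, ‖Mᵀ i j‖ ^ 2 = 1 := by rw [Finset.sum_comm]; exact hM
  rw [isMaximallyEntangled_iff_exists_smul_mem_unitaryGroup hM,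
    isMaximallyEntangled_iff_exists_smul_mem_unitaryGroup hMt]
  simp only [← transpose_smul, transpose_mem_unitaryGroup_iff]

theorem isMaximallyEntangled_submatrix_iff (M : Matrix n n 𝕜) (e₁ e₂ : Equiv.Perm n) :
    IsMaximallyEntangled (M.submatrix e₁ e₂) ↔ IsMaximallyEntangled M := by
  rw [IsMaximallyEntangled, IsMaximallyEntangled, conjTranspose_submatrix, submatrix_mul_equiv]
  conv_rhs => rw [← (reindex e₁.symm e₁.symm).apply_eq_iff_eq]
  simp [reindex_apply, submatrix_smul]

theorem isMaximallyEntangled_iff (M : Matrix n n 𝕜) :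
    IsMaximallyEntangled M ↔ ∀ p q, ∑ r, M p r * starRingEnd 𝕜 (M q r) =
      if p = q then (Fintype.card n : 𝕜)⁻¹ else 0 := by
  simp [IsMaximallyEntangled, ← Matrix.ext_iff, mul_apply, one_apply]

end Matrix

open Matrix

theorem stmt_19_general (d : ℕ) (T : Fin d → Fin d → Fin d → Fin d → ℂ)
    (hnorm : ∑ j, ∑ k, ∑ l, ∑ m, ‖T j k l m‖ ^ 2 = 1) :
    -- all six two-party reduced density matrices are maximally mixed …
    ((∀ p q : Fin d × Fin d,
        (∑ l, ∑ m, T p.1 p.2 l m * (starRingEnd ℂ) (T q.1 q.2 l m)) =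
          if p = q then ((d : ℂ) ^ 2)⁻¹ else 0) ∧
     (∀ p q : Fin d × Fin d,
        (∑ k, ∑ m, T p.1 k p.2 m * (starRingEnd ℂ) (T q.1 k q.2 m)) =
          if p = q then ((d : ℂ) ^ 2)⁻¹ else 0) ∧
     (∀ p q : Fin d × Fin d,
        (∑ k, ∑ l, T p.1 k l p.2 * (starRingEnd ℂ) (T q.1 k l q.2)) =
          if p = q then ((d : ℂ) ^ 2)⁻¹ else 0) ∧
     (∀ p q : Fin d × Fin d,
        (∑ j, ∑ m, T j p.1 p.2 m * (starRingEnd ℂ) (T j q.1 q.2 m)) =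
          if p = q then ((d : ℂ) ^ 2)⁻¹ else 0) ∧
     (∀ p q : Fin d × Fin d,
        (∑ j, ∑ l, T j p.1 l p.2 * (starRingEnd ℂ) (T j q.1 l q.2)) =
          if p = q then ((d : ℂ) ^ 2)⁻¹ else 0) ∧
     (∀ p q : Fin d × Fin d,
        (∑ j, ∑ k, T j k p.1 p.2 * (starRingEnd ℂ) (T j k q.1 q.2)) =
          if p = q then ((d : ℂ) ^ 2)⁻¹ else 0)) ↔
    -- … iff `U`, `U^Γ` and `U^R` are all proportional to unitary matrices
    ((∃ c : ℂ, c • (Matrix.of fun p q : Fin d × Fin d => T p.1 p.2 q.1 q.2) ∈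
        Matrix.unitaryGroup (Fin d × Fin d) ℂ) ∧
     (∃ c : ℂ, c • (Matrix.of fun p q : Fin d × Fin d => T p.1 q.2 q.1 p.2) ∈
        Matrix.unitaryGroup (Fin d × Fin d) ℂ) ∧
     (∃ c : ℂ, c • (Matrix.of fun p q : Fin d × Fin d => T p.1 q.1 p.2 q.2) ∈
        Matrix.unitaryGroup (Fin d × Fin d) ℂ)) := by
  set U : Matrix (Fin d × Fin d) (Fin d × Fin d) ℂ := of fun p q => T p.1 p.2 q.1 q.2
  set UΓ : Matrix (Fin d × Fin d) (Fin d × Fin d) ℂ := of fun p q => T p.1 q.2 q.1 p.2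
  set UR : Matrix (Fin d × Fin d) (Fin d × Fin d) ℂ := of fun p q => T p.1 q.1 p.2 q.2
  have hU : ∑ p, ∑ q, ‖U p q‖ ^ 2 = 1 := by simpa [U, Fintype.sum_prod_type] using hnorm
  have hUΓ : ∑ p, ∑ q, ‖UΓ p q‖ ^ 2 = 1 := by
    simp only [UΓ, of_apply, Fintype.sum_prod_type, ← hnorm]
    refine Finset.sum_congr rfl fun j _ => ?_
    rw [Finset.sum_comm]
    exact (Finset.sum_congr rfl fun l _ => Finset.sum_comm).trans Finset.sum_comm
  have hUR : ∑ p, ∑ q, ‖UR p q‖ ^ 2 = 1 := by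
    simp only [UR, of_apply, Fintype.sum_prod_type, ← hnorm]
    exact Finset.sum_congr rfl fun j _ => Finset.sum_comm
  have pairU : IsMaximallyEntangled U ↔ IsMaximallyEntangled U ∧ IsMaximallyEntangled Uᵀ := by
    rw [isMaximallyEntangled_transpose_iff hU, and_self]
  have pairUR : IsMaximallyEntangled UR ↔ IsMaximallyEntangled UR ∧ IsMaximallyEntangled URᵀ := by
    rw [isMaximallyEntangled_transpose_iff hUR, and_self]
  -- the cuts {1,4} | {2,3} and {2,3} | {1,4} read `U^Γ` with a column, resp. row, pair swapped
  have pairUΓ : IsMaximallyEntangled UΓ ↔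
      IsMaximallyEntangled (UΓ.submatrix (Equiv.refl _) (Equiv.prodComm _ _)) ∧
        IsMaximallyEntangled (UΓᵀ.submatrix (Equiv.prodComm _ _) (Equiv.refl _)) := by
    rw [isMaximallyEntangled_submatrix_iff UΓ (Equiv.refl _) (Equiv.prodComm _ _),
      isMaximallyEntangled_submatrix_iff UΓᵀ (Equiv.prodComm _ _) (Equiv.refl _),
      isMaximallyEntangled_transpose_iff hUΓ, and_self]
  rw [← isMaximallyEntangled_iff_exists_smul_mem_unitaryGroup hU,
    ← isMaximallyEntangled_iff_exists_smul_mem_unitaryGroup hUΓ,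
    ← isMaximallyEntangled_iff_exists_smul_mem_unitaryGroup hUR,
    pairU, pairUR, pairUΓ]
  simp only [isMaximallyEntangled_iff, U, UΓ, UR, of_apply, transpose_apply, submatrix_apply,
    Equiv.prodComm_apply, Prod.fst_swap, Prod.snd_swap, Equiv.refl_apply, Fintype.sum_prod_type,
    Fintype.card_prod, Fintype.card_fin, Nat.cast_pow, ← sq]
  exact ⟨fun ⟨h1, h2, h3, h4, h5, h6⟩ => ⟨⟨h1, h6⟩, ⟨h3, h4⟩, h2, h5⟩,
    fun ⟨⟨h1, h6⟩, ⟨h3, h4⟩, h2, h5⟩ => ⟨h1, h2, h3, h4, h5, h6⟩⟩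

theorem stmt_19 (d : ℕ) (hd : 0 < d) (T : Fin d → Fin d → Fin d → Fin d → ℂ)
    (hnorm : ∑ j, ∑ k, ∑ l, ∑ m, ‖T j k l m‖ ^ 2 = 1) :
    -- all six two-party reduced density matrices are maximally mixed …
    ((∀ p q : Fin d × Fin d,
        (∑ l, ∑ m, T p.1 p.2 l m * (starRingEnd ℂ) (T q.1 q.2 l m)) =
          if p = q then ((d : ℂ) ^ 2)⁻¹ else 0) ∧
     (∀ p q : Fin d × Fin d,
        (∑ k, ∑ m, T p.1 k p.2 m * (starRingEnd ℂ) (T q.1 k q.2 m)) =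
          if p = q then ((d : ℂ) ^ 2)⁻¹ else 0) ∧
     (∀ p q : Fin d × Fin d,
        (∑ k, ∑ l, T p.1 k l p.2 * (starRingEnd ℂ) (T q.1 k l q.2)) =
          if p = q then ((d : ℂ) ^ 2)⁻¹ else 0) ∧
     (∀ p q : Fin d × Fin d,
        (∑ j, ∑ m, T j p.1 p.2 m * (starRingEnd ℂ) (T j q.1 q.2 m)) =
          if p = q then ((d : ℂ) ^ 2)⁻¹ else 0) ∧
     (∀ p q : Fin d × Fin d,
        (∑ j, ∑ l, T j p.1 l p.2 * (starRingEnd ℂ) (T j q.1 l q.2)) =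
          if p = q then ((d : ℂ) ^ 2)⁻¹ else 0) ∧
     (∀ p q : Fin d × Fin d,
        (∑ j, ∑ k, T j k p.1 p.2 * (starRingEnd ℂ) (T j k q.1 q.2)) =
          if p = q then ((d : ℂ) ^ 2)⁻¹ else 0)) ↔
    -- … iff `U`, `U^Γ` and `U^R` are all proportional to unitary matrices
    ((∃ c : ℂ, c • (Matrix.of fun p q : Fin d × Fin d => T p.1 p.2 q.1 q.2) ∈
        Matrix.unitaryGroup (Fin d × Fin d) ℂ) ∧
     (∃ c : ℂ, c • (Matrix.of fun p q : Fin d × Fin d => T p.1 q.2 q.1 p.2) ∈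
        Matrix.unitaryGroup (Fin d × Fin d) ℂ) ∧
     (∃ c : ℂ, c • (Matrix.of fun p q : Fin d × Fin d => T p.1 q.1 p.2 q.2) ∈
        Matrix.unitaryGroup (Fin d × Fin d) ℂ)) :=
  stmt_19_general d T hnorm
end
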